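/- arXiv:2502.16254 — 2 statements merged into one kernel-verified Lean document; each statement's English description precedes it below -/
import Mathlib

section
/- Let (χ, ψ, F) be a non-abelian 2-cocycle of a Nijenhuis Lie algebra (g, [·,·]_g, N) with values in a Nijenhuis Lie algebra (h, [·,·]_h, S). Define χ̄(x,y) := χ(N x, y) + χ(x, N y) − S χ(x,y) + ψ_x F y − ψ_y F x − F[x,y]_g and ψ̄_x h := ψ_{N x} h + ψ_x (S h) − S(ψ_x h) + [F x, h]_h. Then (χ̄, ψ̄) is a non-abelian 2-cocycle of the deformed Lie algebra g_N with values in the deformed Lie algebra h_S; that is, each ψ̄_x is a derivation of (h, [·,·]_S), and for all x, y, z ∈ g, h ∈ h: ψ̄_x ψ̄_y h − ψ̄_y ψ̄_x h − ψ̄_{[x,y]_N} h = [χ̄(x,y), h]_S and ψ̄_x χ̄(y,z) + ψ̄_y χ̄(z,x) + ψ̄_z χ̄(x,y) − χ̄([x,y]_N, z) − χ̄([y,z]_N, x) − χ̄([z,x]_N, y) = 0. -/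
/-!
A non-abelian 2-cocycle `(χ, ψ)` is the same thing as a Lie bracket on `g × h` of the form
`[(x, a), (y, b)] = ([x, y], ψ x b - ψ y a + χ x y + [a, b])`, and the Nijenhuis conditions
on `(χ, ψ, F)` make `Ñ (x, a) = (N x, S a + F x)` a Nijenhuis operator for this bracket.
Deforming the extension by `Ñ` therefore gives again a Lie bracket; expanding it, it is the
extension bracket of `g_N` by `h_S` built from `(χ̄, ψ̄)`, and the cocycle conditions for
`(χ̄, ψ̄)` are read off its Jacobi identity.
-/

/-- A non-abelian 2-cocycle of the Nijenhuis Lie algebra `(g, N)` with values in the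
Nijenhuis Lie algebra `(h, S)`. -/
def IsNijNonabelian2Cocycle (k : Type*) {g h : Type*} [Field k]
    [LieRing g] [LieAlgebra k g] [LieRing h] [LieAlgebra k h]
    (N : g → g) (S : h → h) (χ : g → g → h) (ψ : g → h → h) (F : g → h) : Prop :=
  (∀ x : g, IsLinearMap k (χ x)) ∧ (∀ y : g, IsLinearMap k (fun x => χ x y)) ∧
  (∀ x : g, IsLinearMap k (ψ x)) ∧ (∀ a : h, IsLinearMap k (fun x => ψ x a)) ∧
  IsLinearMap k F ∧
  (∀ x : g, χ x x = 0) ∧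
  (∀ (x : g) (a b : h), ψ x ⁅a, b⁆ = ⁅ψ x a, b⁆ + ⁅a, ψ x b⁆) ∧
  (∀ (x y : g) (a : h), ψ x (ψ y a) - ψ y (ψ x a) - ψ ⁅x, y⁆ a = ⁅χ x y, a⁆) ∧
  (∀ x y z : g, ψ x (χ y z) + ψ y (χ z x) + ψ z (χ x y)
      - χ ⁅x, y⁆ z - χ ⁅y, z⁆ x - χ ⁅z, x⁆ y = 0) ∧
  (∀ (x : g) (a : h), ψ (N x) (S a)
      = S (ψ (N x) a + ψ x (S a) - S (ψ x a)) + S ⁅F x, a⁆ - ⁅F x, S a⁆) ∧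
  (∀ x y : g, χ (N x) (N y) - S (χ (N x) y + χ x (N y) - S (χ x y))
      - F (⁅N x, y⁆ + ⁅x, N y⁆ - N ⁅x, y⁆)
      + ψ (N x) (F y) - ψ (N y) (F x)
      - S (ψ x (F y) - ψ y (F x) - F ⁅x, y⁆) + ⁅F x, F y⁆ = 0)

structure IsBiadditive {α β γ : Type*} [AddCommGroup α] [AddCommGroup β] [AddCommGroup γ]
    (f : α → β → γ) : Prop where
  add_left : ∀ x x' y, f (x + x') y = f x y + f x' y
  add_right : ∀ x y y', f x (y + y') = f x y + f x y'

namespace IsBiadditive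

variable {α β γ : Type*} [AddCommGroup α] [AddCommGroup β] [AddCommGroup γ] {f : α → β → γ}

theorem zero_left (hf : IsBiadditive f) (y : β) : f 0 y = 0 :=
  (AddMonoidHom.mk' (f · y) (hf.add_left · · y)).map_zero

theorem zero_right (hf : IsBiadditive f) (x : α) : f x 0 = 0 :=
  (AddMonoidHom.mk' (f x) (hf.add_right x)).map_zero

theorem neg_left (hf : IsBiadditive f) (x : α) (y : β) : f (-x) y = -f x y :=
  (AddMonoidHom.mk' (f · y) (hf.add_left · · y)).map_neg x

theorem neg_right (hf : IsBiadditive f) (x : α) (y : β) : f x (-y) = -f x y :=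
  (AddMonoidHom.mk' (f x) (hf.add_right x)).map_neg y

theorem sub_left (hf : IsBiadditive f) (x x' : α) (y : β) : f (x - x') y = f x y - f x' y :=
  (AddMonoidHom.mk' (f · y) (hf.add_left · · y)).map_sub x x'

theorem sub_right (hf : IsBiadditive f) (x : α) (y y' : β) : f x (y - y') = f x y - f x y' :=
  (AddMonoidHom.mk' (f x) (hf.add_right x)).map_sub y y'

end IsBiadditive

structure IsLieBracket {L : Type*} [AddCommGroup L] (br : L → L → L) : Prop
    extends IsBiadditive br where
  self : ∀ x, br x x = 0
  jacobi : ∀ x y z, br (br x y) z + br (br y z) x + br (br z x) y = 0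

theorem isLieBracket_lie (L : Type*) [LieRing L] : IsLieBracket fun x y : L => ⁅x, y⁆ where
  add_left := add_lie
  add_right := lie_add
  self := lie_self
  jacobi x y z := by
    rw [← lie_skew ⁅x, y⁆, ← lie_skew ⁅y, z⁆, ← lie_skew ⁅z, x⁆, ← neg_add, ← neg_add]
    simpa [add_assoc] using congrArg Neg.neg (lie_jacobi z x y)

namespace IsLieBracket

variable {L : Type*} [AddCommGroup L] {br : L → L → L}

theorem skew (hbr : IsLieBracket br) (x y : L) : br y x = -br x y := by
  have := hbr.self (x + y)
  rw [hbr.add_left, hbr.add_right, hbr.add_right, hbr.self, hbr.self] at this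
  exact eq_neg_of_add_eq_zero_left (by simpa [add_comm] using this)

end IsLieBracket

section Nijenhuis

variable {L : Type*} [AddCommGroup L]

def deformedBracket (br : L → L → L) (N : L →+ L) (x y : L) : L :=
  br (N x) y + br x (N y) - N (br x y)

def IsNijenhuis (br : L → L → L) (N : L →+ L) : Prop :=
  ∀ x y, br (N x) (N y) = N (deformedBracket br N x y)

variable {br : L → L → L} {N : L →+ L}

theorem deformedBracket_deformedBracket (hbr : IsBiadditive br) (hN : IsNijenhuis br N)
    (x y z : L) :
    deformedBracket br N (deformedBracket br N x y) z =
      br (br (N x) (N y)) z + br (br (N x) y) (N z) + br (br x (N y)) (N z)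
        - N (br (br x y) (N z) + br (br (N x) y) z + br (br x (N y)) z)
        + N (N (br (br x y) z)) := by
  have hxy := hN x y
  have hxyz := hN (br x y) z
  simp only [deformedBracket] at hxy hxyz ⊢
  rw [← hxy]
  simp only [hbr.add_left, hbr.sub_left, map_add, map_sub]
  rw [hxyz]
  simp only [map_add, map_sub]
  abel

theorem IsLieBracket.deformedBracket (hbr : IsLieBracket br) (hN : IsNijenhuis br N) :
    IsLieBracket (deformedBracket br N) where
  add_left x x' y := by
    simp only [_root_.deformedBracket, map_add, hbr.add_left]; abel
  add_right x y y' := by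
    simp only [_root_.deformedBracket, map_add, hbr.add_right]; abel
  self x := by simp [_root_.deformedBracket, hbr.self, hbr.skew x (N x)]
  jacobi x y z := by
    have hN₁ : N (br (br x y) (N z) + br (br y z) (N x) + br (br z x) (N y) +
        (br (br (N x) y) z + br (br (N y) z) x + br (br (N z) x) y) +
        (br (br x (N y)) z + br (br y (N z)) x + br (br z (N x)) y)) = 0 := by
      convert N.map_zero using 2
      linear_combination (norm := abel) hbr.jacobi x y (N z) + hbr.jacobi y z (N x) +
        hbr.jacobi z x (N y)
    rw [deformedBracket_deformedBracket hbr.toIsBiadditive hN,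
      deformedBracket_deformedBracket hbr.toIsBiadditive hN,
      deformedBracket_deformedBracket hbr.toIsBiadditive hN]
    have hN₂ : N (N (br (br x y) z)) + N (N (br (br y z) x)) + N (N (br (br z x) y)) = 0 := by
      simpa only [map_add, map_zero] using congrArg (fun v => N (N v)) (hbr.jacobi x y z)
    simp only [map_add] at hN₁ ⊢
    linear_combination (norm := abel) hbr.jacobi (N x) (N y) z + hbr.jacobi (N y) (N z) x +
      hbr.jacobi (N z) (N x) y - hN₁ + hN₂

end Nijenhuis

section Extension

variable {g h : Type*} [AddCommGroup g] [AddCommGroup h]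

def extBracket (brg : g → g → g) (brh : h → h → h) (χ : g → g → h) (ψ : g → h → h)
    (X Y : g × h) : g × h :=
  (brg X.1 Y.1, ψ X.1 Y.2 - ψ Y.1 X.2 + χ X.1 Y.1 + brh X.2 Y.2)

structure IsNonabelianCocycle (brg : g → g → g) (brh : h → h → h) (χ : g → g → h)
    (ψ : g → h → h) : Prop where
  alternating : ∀ x, χ x x = 0
  derivation : ∀ x a b, ψ x (brh a b) = brh (ψ x a) b + brh a (ψ x b)
  curvature : ∀ x y a, ψ x (ψ y a) - ψ y (ψ x a) - ψ (brg x y) a = brh (χ x y) a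
  cocycle : ∀ x y z, ψ x (χ y z) + ψ y (χ z x) + ψ z (χ x y)
      - χ (brg x y) z - χ (brg y z) x - χ (brg z x) y = 0

variable {brg : g → g → g} {brh : h → h → h} {χ : g → g → h} {ψ : g → h → h}

theorem IsNonabelianCocycle.isLieBracket_extBracket (hg : IsLieBracket brg)
    (hh : IsLieBracket brh) (hχ : IsBiadditive χ) (hψ : IsBiadditive ψ)
    (hc : IsNonabelianCocycle brg brh χ ψ) : IsLieBracket (extBracket brg brh χ ψ) where
  add_left X X' Y := Prod.ext (hg.add_left _ _ _) (by
    simp only [extBracket, Prod.fst_add, Prod.snd_add, hψ.add_left, hψ.add_right, hχ.add_left,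
      hh.add_left]
    abel)
  add_right X Y Y' := Prod.ext (hg.add_right _ _ _) (by
    simp only [extBracket, Prod.fst_add, Prod.snd_add, hψ.add_left, hψ.add_right, hχ.add_right,
      hh.add_right]
    abel)
  self X := Prod.ext (hg.self _) (by simp [extBracket, hc.alternating, hh.self])
  jacobi := by
    rintro ⟨x, a⟩ ⟨y, b⟩ ⟨z, c⟩
    refine Prod.ext (hg.jacobi x y z) ?_
    simp only [extBracket, Prod.snd_add, Prod.snd_zero, hψ.add_right, hψ.sub_right, hh.add_left,
      hh.sub_left]
    linear_combination (norm := abel) -hc.cocycle x y z - hc.curvature x y c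
      - hc.curvature y z a - hc.curvature z x b - hc.derivation z a b - hc.derivation x b c
      - hc.derivation y c a - hh.skew (ψ z b) a - hh.skew (ψ x c) b - hh.skew (ψ y a) c
      + hh.jacobi a b c

theorem IsLieBracket.isNonabelianCocycle_of_extBracket (hg : IsLieBracket brg)
    (hh : IsLieBracket brh) (hχ : IsBiadditive χ) (hψ : IsBiadditive ψ)
    (hE : IsLieBracket (extBracket brg brh χ ψ)) : IsNonabelianCocycle brg brh χ ψ where
  alternating x := by
    simpa [extBracket, hh.self, hψ.zero_right] using congrArg Prod.snd (hE.self (x, 0))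
  derivation x a b := by
    have := congrArg Prod.snd (hE.jacobi (x, 0) (0, a) (0, b))
    simp only [extBracket, hg.zero_right, hψ.zero_left, sub_zero, hχ.zero_right, add_zero,
      hh.zero_left, hg.zero_left, sub_self, hχ.zero_left, zero_add, zero_sub, hh.zero_right,
      Prod.mk_add_mk, hh.neg_left, Prod.snd_zero] at this
    linear_combination (norm := abel) -this - hh.skew (ψ x b) a
  curvature x y a := by
    have := congrArg Prod.snd (hE.jacobi (x, 0) (y, 0) (0, a))
    simp only [extBracket, hψ.zero_right, sub_self, zero_add, hh.zero_left, add_zero,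
      hg.zero_right, hψ.zero_left, sub_zero, hχ.zero_right, hg.zero_left, zero_sub, hχ.zero_left,
      hh.zero_right, Prod.mk_add_mk, hψ.neg_right, sub_neg_eq_add, Prod.snd_zero] at this
    linear_combination (norm := abel) -this
  cocycle x y z := by
    have := congrArg Prod.snd (hE.jacobi (x, 0) (y, 0) (z, 0))
    simp only [extBracket, hψ.zero_right, sub_self, zero_add, hh.zero_left, add_zero, zero_sub,
      hh.zero_right, Prod.mk_add_mk, Prod.snd_zero] at this
    linear_combination (norm := abel) -this

theorem isLieBracket_extBracket_iff (hg : IsLieBracket brg) (hh : IsLieBracket brh)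
    (hχ : IsBiadditive χ) (hψ : IsBiadditive ψ) :
    IsLieBracket (extBracket brg brh χ ψ) ↔ IsNonabelianCocycle brg brh χ ψ :=
  ⟨hg.isNonabelianCocycle_of_extBracket hh hχ hψ, fun hc => hc.isLieBracket_extBracket hg hh hχ hψ⟩

def extOperator (N : g →+ g) (S : h →+ h) (F : g →+ h) : g × h →+ g × h :=
  (N.comp (AddMonoidHom.fst g h)).prod
    (S.comp (AddMonoidHom.snd g h) + F.comp (AddMonoidHom.fst g h))

@[simp]
theorem extOperator_apply (N : g →+ g) (S : h →+ h) (F : g →+ h) (X : g × h) :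
    extOperator N S F X = (N X.1, S X.2 + F X.1) :=
  rfl

def deformedCocycle (brg : g → g → g) (N : g →+ g) (S : h →+ h) (χ : g → g → h)
    (ψ : g → h → h) (F : g →+ h) (x y : g) : h :=
  χ (N x) y + χ x (N y) - S (χ x y) + ψ x (F y) - ψ y (F x) - F (brg x y)

def deformedAction (brh : h → h → h) (N : g →+ g) (S : h →+ h) (ψ : g → h → h) (F : g →+ h)
    (x : g) (a : h) : h :=
  ψ (N x) a + ψ x (S a) - S (ψ x a) + brh (F x) a

variable {N : g →+ g} {S : h →+ h} {F : g →+ h}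

theorem isBiadditive_deformedCocycle (hg : IsBiadditive brg) (hχ : IsBiadditive χ)
    (hψ : IsBiadditive ψ) : IsBiadditive (deformedCocycle brg N S χ ψ F) where
  add_left x x' y := by
    simp only [deformedCocycle, map_add, hg.add_left, hχ.add_left, hψ.add_left, hψ.add_right]
    abel
  add_right x y y' := by
    simp only [deformedCocycle, map_add, hg.add_right, hχ.add_right, hψ.add_left, hψ.add_right]
    abel

theorem isBiadditive_deformedAction (hh : IsBiadditive brh) (hψ : IsBiadditive ψ) :
    IsBiadditive (deformedAction brh N S ψ F) where
  add_left x x' a := by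
    simp only [deformedAction, map_add, hh.add_left, hψ.add_left]
    abel
  add_right x a a' := by
    simp only [deformedAction, map_add, hh.add_right, hψ.add_right]
    abel

theorem deformedBracket_extBracket (hh : IsLieBracket brh) (hψ : IsBiadditive ψ) :
    deformedBracket (extBracket brg brh χ ψ) (extOperator N S F) =
      extBracket (deformedBracket brg N) (deformedBracket brh S) (deformedCocycle brg N S χ ψ F)
        (deformedAction brh N S ψ F) := by
  ext ⟨x, a⟩ ⟨y, b⟩
  · rfl
  · simp only [deformedBracket, extBracket, extOperator_apply, deformedCocycle, deformedAction,
      Prod.snd_add, Prod.snd_sub, hψ.add_right, hh.add_left, hh.add_right, map_add, map_sub]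
    linear_combination (norm := abel) hh.skew (F y) a

theorem isNijenhuis_extOperator (hh : IsLieBracket brh) (hψ : IsBiadditive ψ)
    (hN : IsNijenhuis brg N) (hS : IsNijenhuis brh S)
    (hNS : ∀ x a, ψ (N x) (S a) + brh (F x) (S a) = S (deformedAction brh N S ψ F x a))
    (hNF : ∀ x y, ψ (N x) (F y) - ψ (N y) (F x) + χ (N x) (N y) + brh (F x) (F y) =
      S (deformedCocycle brg N S χ ψ F x y) + F (deformedBracket brg N x y)) :
    IsNijenhuis (extBracket brg brh χ ψ) (extOperator N S F) := by
  rintro ⟨x, a⟩ ⟨y, b⟩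
  rw [deformedBracket_extBracket hh hψ]
  refine Prod.ext (hN x y) ?_
  simp only [extBracket, extOperator_apply, hψ.add_right, hh.add_left, hh.add_right, map_add,
    map_sub]
  linear_combination (norm := abel) hNS x b - hNS y a + hNF x y + hS a b + hh.skew (F y) (S a)

end Extension

namespace IsNijNonabelian2Cocycle

variable {k g h : Type*} [Field k] [LieRing g] [LieAlgebra k g] [LieRing h] [LieAlgebra k h]
  {χ : g → g → h} {ψ : g → h → h}

theorem isBiadditive_cocycle {N : g → g} {S : h → h} {F : g → h}
    (hc : IsNijNonabelian2Cocycle k N S χ ψ F) : IsBiadditive χ :=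
  ⟨fun x x' y => (hc.2.1 y).map_add x x', fun x => (hc.1 x).map_add⟩

theorem isBiadditive_action {N : g → g} {S : h → h} {F : g → h}
    (hc : IsNijNonabelian2Cocycle k N S χ ψ F) : IsBiadditive ψ :=
  ⟨fun x x' a => (hc.2.2.2.1 a).map_add x x', fun x => (hc.2.2.1 x).map_add⟩

theorem isNonabelianCocycle {N : g → g} {S : h → h} {F : g → h}
    (hc : IsNijNonabelian2Cocycle k N S χ ψ F) :
    IsNonabelianCocycle (fun x y : g => ⁅x, y⁆) (fun a b : h => ⁅a, b⁆) χ ψ :=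
  let ⟨_, _, _, _, _, hχ, hder, hcurv, hcoc, _⟩ := hc
  ⟨hχ, hder, hcurv, hcoc⟩

theorem isNijenhuis_extOperator {N : g →+ g} {S : h →+ h} {F : g →+ h}
    (hN : IsNijenhuis (fun x y : g => ⁅x, y⁆) N) (hS : IsNijenhuis (fun a b : h => ⁅a, b⁆) S)
    (hc : IsNijNonabelian2Cocycle k N S χ ψ F) :
    IsNijenhuis (extBracket (fun x y : g => ⁅x, y⁆) (fun a b : h => ⁅a, b⁆) χ ψ)
      (extOperator N S F) := by
  have hψ := hc.isBiadditive_action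
  obtain ⟨-, -, -, -, -, -, -, -, -, hNS, hNF⟩ := hc
  refine _root_.isNijenhuis_extOperator (isLieBracket_lie h) hψ hN hS
    (fun x a => ?_) (fun x y => ?_)
  · simp only [deformedAction, map_add, hNS]
    abel
  · rw [← sub_eq_zero, ← hNF x y]
    simp only [deformedCocycle, deformedBracket, map_add, map_sub]
    abel

end IsNijNonabelian2Cocycle

/-- For a non-abelian 2-cocycle `(χ, ψ, F)` of `(g, N)` with values in
`(h, S)`, the pair `(χ̄, ψ̄)` defined by
`χ̄(x,y) = χ(N x, y) + χ(x, N y) - S χ(x,y) + ψ_x F y - ψ_y F x - F[x,y]` and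
`ψ̄_x h = ψ_{N x} h + ψ_x (S h) - S(ψ_x h) + [F x, h]` is a non-abelian 2-cocycle of
the deformed Lie algebra `g_N` with values in the deformed Lie algebra `h_S`. -/
theorem stmt_6 {k g h : Type*} [Field k]
    [LieRing g] [LieAlgebra k g] [LieRing h] [LieAlgebra k h]
    (N : g →ₗ[k] g) (S : h →ₗ[k] h)
    (hN : ∀ x y : g, ⁅N x, N y⁆ = N (⁅N x, y⁆ + ⁅x, N y⁆ - N ⁅x, y⁆))
    (hS : ∀ a b : h, ⁅S a, S b⁆ = S (⁅S a, b⁆ + ⁅a, S b⁆ - S ⁅a, b⁆))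
    (χ : g → g → h) (ψ : g → h → h) (F : g → h)
    (hc : IsNijNonabelian2Cocycle k (⇑N) (⇑S) χ ψ F) :
    -- the deformed brackets
    ∀ brN : g → g → g, brN = (fun x y => ⁅N x, y⁆ + ⁅x, N y⁆ - N ⁅x, y⁆) →
    ∀ brS : h → h → h, brS = (fun a b => ⁅S a, b⁆ + ⁅a, S b⁆ - S ⁅a, b⁆) →
    -- the deformed cocycle
    ∀ χb : g → g → h, χb = (fun x y =>
        χ (N x) y + χ x (N y) - S (χ x y) + ψ x (F y) - ψ y (F x) - F ⁅x, y⁆) →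
    ∀ ψb : g → h → h, ψb = (fun x a =>
        ψ (N x) a + ψ x (S a) - S (ψ x a) + ⁅F x, a⁆) →
      -- each ψ̄_x is a derivation of the deformed Lie algebra h_S
      (∀ (x : g) (a b : h), ψb x (brS a b) = brS (ψb x a) b + brS a (ψb x b)) ∧
      -- (nc1) for the deformed Lie algebras
      (∀ (x y : g) (a : h),
        ψb x (ψb y a) - ψb y (ψb x a) - ψb (brN x y) a = brS (χb x y) a) ∧
      -- (nc2) for the deformed Lie algebras
      (∀ x y z : g, ψb x (χb y z) + ψb y (χb z x) + ψb z (χb x y)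
          - χb (brN x y) z - χb (brN y z) x - χb (brN z x) y = 0) := by
  rintro brN rfl brS rfl χb rfl ψb rfl
  have hg := isLieBracket_lie g
  have hh := isLieBracket_lie h
  have hχ := hc.isBiadditive_cocycle
  have hψ := hc.isBiadditive_action
  have hN' : IsNijenhuis _ N.toAddMonoidHom := hN
  have hS' : IsNijenhuis _ S.toAddMonoidHom := hS
  have hF : IsLinearMap k F := hc.2.2.2.2.1
  have hE := (isLieBracket_extBracket_iff hg hh hχ hψ).2 hc.isNonabelianCocycle
  have hÑ := hc.isNijenhuis_extOperator (F := AddMonoidHom.mk' F hF.map_add) hN' hS'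
  have hdef := hE.deformedBracket hÑ
  rw [deformedBracket_extBracket hh hψ] at hdef
  have hdeformed := (isLieBracket_extBracket_iff (hg.deformedBracket hN') (hh.deformedBracket hS')
    (isBiadditive_deformedCocycle hg.toIsBiadditive hχ hψ)
    (isBiadditive_deformedAction hh.toIsBiadditive hψ)).1 hdef
  exact ⟨hdeformed.derivation, hdeformed.curvature, hdeformed.cocycle⟩
end

section
/- Let (g, [·,·]_g, N) be a Nijenhuis Lie algebra, (V, ρ, S) a Nijenhuis representation, and (D_V, D_g) ∈ Der(V, S) × Der(g, N) a pair satisfying D_V(ρ_x v) = ρ_{D_g x} v + ρ_x(D_V v) for all x, v. If (χ, F) and (χ', F') are 2-cocycles that are cohomologous via a linear map φ : g → V, then the 2-cocycles (χ_{(D_V,D_g)}, F_{(D_V,D_g)}) and (χ'_{(D_V,D_g)}, F'_{(D_V,D_g)}) are cohomologous via the map D_V ∘ φ − φ ∘ D_g. -/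
/-!
The action `χ ↦ χ_{(D_V,D_g)}` of the pair of derivations on cochains is additive, and the
compatibility conditions say exactly that it commutes with both parts of the coboundary of a
1-cochain `φ`: the Chevalley–Eilenberg part `δφ` and the Nijenhuis part `S ∘ φ - φ ∘ N`, the
1-cochain `φ` being sent to `D_V ∘ φ - φ ∘ D_g`. Applying it to `χ - χ' = δφ` and
`F - F' = S ∘ φ - φ ∘ N` gives the claim.
-/

/-- A 2-cocycle of the Nijenhuis Lie algebra `(g, N)` with coefficients in the
Nijenhuis representation `(V, ρ, S)`. -/
def IsNij2Cocycle (k : Type*) {g V : Type*} [Field k]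
    [LieRing g] [LieAlgebra k g] [AddCommGroup V] [Module k V]
    (N : g → g) (ρ : g → V → V) (S : V → V) (χ : g → g → V) (F : g → V) : Prop :=
  (∀ x : g, IsLinearMap k (χ x)) ∧ (∀ y : g, IsLinearMap k (fun x => χ x y)) ∧
  IsLinearMap k F ∧
  (∀ x : g, χ x x = 0) ∧
  (∀ x y z : g, ρ x (χ y z) + ρ y (χ z x) + ρ z (χ x y)
      - χ ⁅x, y⁆ z - χ ⁅y, z⁆ x - χ ⁅z, x⁆ y = 0) ∧
  (∀ x y : g, χ (N x) (N y) - S (χ (N x) y + χ x (N y) - S (χ x y))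
      - F (⁅N x, y⁆ + ⁅x, N y⁆ - N ⁅x, y⁆)
      + ρ (N x) (F y) - ρ (N y) (F x)
      - S (ρ x (F y) - ρ y (F x) - F ⁅x, y⁆) = 0)

section NijenhuisPart

variable {R L M : Type*} [CommRing R] [AddCommGroup L] [Module R L] [AddCommGroup M] [Module R M]

/-- `F_{(D_V,D_g)}` in the paper's notation. -/
def derivAct₁ (DM : M →ₗ[R] M) (DL : L →ₗ[R] L) (F : L → M) (x : L) : M :=
  DM (F x) - F (DL x)

def nijCoboundary (S : M →ₗ[R] M) (N : L →ₗ[R] L) (φ : L →ₗ[R] M) (x : L) : M :=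
  S (φ x) - φ (N x)

theorem derivAct₁_sub (DM : M →ₗ[R] M) (DL : L →ₗ[R] L) (F F' : L → M) :
    derivAct₁ DM DL F - derivAct₁ DM DL F' = derivAct₁ DM DL (F - F') := by
  funext x
  simp only [derivAct₁, Pi.sub_apply, map_sub]
  abel

theorem derivAct₁_nijCoboundary {DM S : M →ₗ[R] M} {DL N : L →ₗ[R] L}
    (hS : ∀ v, DM (S v) = S (DM v)) (hN : ∀ x, DL (N x) = N (DL x)) (φ : L →ₗ[R] M) :
    derivAct₁ DM DL (nijCoboundary S N φ) = nijCoboundary S N (DM ∘ₗ φ - φ ∘ₗ DL) := by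
  funext x
  simp only [derivAct₁, nijCoboundary, LinearMap.sub_apply, LinearMap.comp_apply, map_sub, hS,
    hN]
  abel

end NijenhuisPart

section LiePart

variable {R L M : Type*} [CommRing R] [LieRing L] [LieAlgebra R L] [AddCommGroup M] [Module R M]

/-- `χ_{(D_V,D_g)}` in the paper's notation. -/
def derivAct₂ (DM : M →ₗ[R] M) (DL : L →ₗ[R] L) (χ : L → L → M) (x y : L) : M :=
  DM (χ x y) - χ (DL x) y - χ x (DL y)

def lieCoboundary (ρ : L →ₗ[R] M →ₗ[R] M) (φ : L →ₗ[R] M) (x y : L) : M :=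
  ρ x (φ y) - ρ y (φ x) - φ ⁅x, y⁆

theorem derivAct₂_sub (DM : M →ₗ[R] M) (DL : L →ₗ[R] L) (χ χ' : L → L → M) :
    derivAct₂ DM DL χ - derivAct₂ DM DL χ' = derivAct₂ DM DL (χ - χ') := by
  funext x y
  simp only [derivAct₂, Pi.sub_apply, map_sub]
  abel

theorem derivAct₂_lieCoboundary {ρ : L →ₗ[R] M →ₗ[R] M} {DM : M →ₗ[R] M} {DL : L →ₗ[R] L}
    (hDL : ∀ x y, DL ⁅x, y⁆ = ⁅DL x, y⁆ + ⁅x, DL y⁆)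
    (hρ : ∀ x v, DM (ρ x v) = ρ (DL x) v + ρ x (DM v)) (φ : L →ₗ[R] M) :
    derivAct₂ DM DL (lieCoboundary ρ φ) = lieCoboundary ρ (DM ∘ₗ φ - φ ∘ₗ DL) := by
  funext x y
  simp only [derivAct₂, lieCoboundary, LinearMap.sub_apply, LinearMap.comp_apply, map_sub,
    map_add, hρ, hDL]
  abel

end LiePart

theorem stmt_16_general {k g V : Type*} [Field k]
    [LieRing g] [LieAlgebra k g] [AddCommGroup V] [Module k V]
    (N : g →ₗ[k] g)
    (ρ : g →ₗ[k] V →ₗ[k] V)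
    (S : V →ₗ[k] V)
    -- a pair (D_V, D_g) ∈ Der(V, S) × Der(g, N) compatible with ρ
    (DV : V →ₗ[k] V) (Dg : g →ₗ[k] g)
    (hDVS : ∀ v : V, DV (S v) = S (DV v))
    (hDgLie : ∀ x y : g, Dg ⁅x, y⁆ = ⁅Dg x, y⁆ + ⁅x, Dg y⁆)
    (hDgN : ∀ x : g, Dg (N x) = N (Dg x))
    (hcomp : ∀ (x : g) (v : V), DV (ρ x v) = ρ (Dg x) v + ρ x (DV v))
    -- two cohomologous 2-cocycles
    (χ χ' : g → g → V) (F F' : g → V)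
    (φ : g →ₗ[k] V)
    (hφ1 : ∀ x y : g, χ x y - χ' x y = ρ x (φ y) - ρ y (φ x) - φ ⁅x, y⁆)
    (hφ2 : ∀ x : g, F x - F' x = S (φ x) - φ (N x)) :
    -- the transformed 2-cocycles are cohomologous via D_V ∘ φ - φ ∘ D_g
    (∀ x y : g,
      (DV (χ x y) - χ (Dg x) y - χ x (Dg y))
        - (DV (χ' x y) - χ' (Dg x) y - χ' x (Dg y))
      = ρ x (DV (φ y) - φ (Dg y)) - ρ y (DV (φ x) - φ (Dg x))
        - (DV (φ ⁅x, y⁆) - φ (Dg ⁅x, y⁆))) ∧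
    (∀ x : g,
      (DV (F x) - F (Dg x)) - (DV (F' x) - F' (Dg x))
      = S (DV (φ x) - φ (Dg x)) - (DV (φ (N x)) - φ (Dg (N x)))) := by
  have hχ : χ - χ' = lieCoboundary ρ φ := funext fun x => funext (hφ1 x)
  have hF : F - F' = nijCoboundary S N φ := funext hφ2
  have h₂ : derivAct₂ DV Dg χ - derivAct₂ DV Dg χ' = lieCoboundary ρ (DV ∘ₗ φ - φ ∘ₗ Dg) := by
    rw [derivAct₂_sub, hχ, derivAct₂_lieCoboundary hDgLie hcomp]
  have h₁ : derivAct₁ DV Dg F - derivAct₁ DV Dg F' = nijCoboundary S N (DV ∘ₗ φ - φ ∘ₗ Dg) := by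
    rw [derivAct₁_sub, hF, derivAct₁_nijCoboundary hDVS hDgN]
  exact ⟨fun x y => congrFun (congrFun h₂ x) y, fun x => congrFun h₁ x⟩

/-- If `(D_V, D_g)` is a compatible pair of Nijenhuis Lie algebra
derivations and the 2-cocycles `(χ, F)` and `(χ', F')` are cohomologous via
`φ : g → V`, then the transformed 2-cocycles `(χ_{(D_V,D_g)}, F_{(D_V,D_g)})` and
`(χ'_{(D_V,D_g)}, F'_{(D_V,D_g)})` are cohomologous via `D_V ∘ φ - φ ∘ D_g`. -/
theorem stmt_16 {k g V : Type*} [Field k]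
    [LieRing g] [LieAlgebra k g] [AddCommGroup V] [Module k V]
    (N : g →ₗ[k] g)
    (hN : ∀ x y : g, ⁅N x, N y⁆ = N (⁅N x, y⁆ + ⁅x, N y⁆ - N ⁅x, y⁆))
    (ρ : g →ₗ[k] V →ₗ[k] V)
    (hρ : ∀ (x y : g) (v : V), ρ ⁅x, y⁆ v = ρ x (ρ y v) - ρ y (ρ x v))
    (S : V →ₗ[k] V)
    (hNS : ∀ (x : g) (v : V), ρ (N x) (S v) = S (ρ (N x) v + ρ x (S v) - S (ρ x v)))
    -- a pair (D_V, D_g) ∈ Der(V, S) × Der(g, N) compatible with ρ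
    (DV : V →ₗ[k] V) (Dg : g →ₗ[k] g)
    (hDVS : ∀ v : V, DV (S v) = S (DV v))
    (hDgLie : ∀ x y : g, Dg ⁅x, y⁆ = ⁅Dg x, y⁆ + ⁅x, Dg y⁆)
    (hDgN : ∀ x : g, Dg (N x) = N (Dg x))
    (hcomp : ∀ (x : g) (v : V), DV (ρ x v) = ρ (Dg x) v + ρ x (DV v))
    -- two cohomologous 2-cocycles
    (χ χ' : g → g → V) (F F' : g → V)
    (hc : IsNij2Cocycle k (⇑N) (fun x v => ρ x v) (⇑S) χ F)
    (hc' : IsNij2Cocycle k (⇑N) (fun x v => ρ x v) (⇑S) χ' F')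
    (φ : g →ₗ[k] V)
    (hφ1 : ∀ x y : g, χ x y - χ' x y = ρ x (φ y) - ρ y (φ x) - φ ⁅x, y⁆)
    (hφ2 : ∀ x : g, F x - F' x = S (φ x) - φ (N x)) :
    -- the transformed 2-cocycles are cohomologous via D_V ∘ φ - φ ∘ D_g
    (∀ x y : g,
      (DV (χ x y) - χ (Dg x) y - χ x (Dg y))
        - (DV (χ' x y) - χ' (Dg x) y - χ' x (Dg y))
      = ρ x (DV (φ y) - φ (Dg y)) - ρ y (DV (φ x) - φ (Dg x))
        - (DV (φ ⁅x, y⁆) - φ (Dg ⁅x, y⁆))) ∧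
    (∀ x : g,
      (DV (F x) - F (Dg x)) - (DV (F' x) - F' (Dg x))
      = S (DV (φ x) - φ (Dg x)) - (DV (φ (N x)) - φ (Dg (N x)))) :=
  stmt_16_general N ρ S DV Dg hDVS hDgLie hDgN hcomp χ χ' F F' φ hφ1 hφ2
end
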